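/- For x, y ∈ ℝ² with x ≠ y, the Frobenius norm of the Jacobian with respect to x of the map x ↦ k_D·(y − x)/‖y − x‖³ (k_D > 0) is at most (3 + √2)·k_D/‖x − y‖³. -/

import Mathlib

/-!
With `v = y - x`, the Jacobian is `-k_D (‖v‖⁻³ I - 3 ‖v‖⁻⁵ v vᵀ)`. In the plane the squared
Frobenius norm of `a I - b v vᵀ` is `2a² - 2ab‖v‖² + b²‖v‖⁴`, which for `a = ‖v‖⁻³`,
`b = 3‖v‖⁻⁵` equals `5‖v‖⁻⁶`. So the Frobenius norm is exactly `√5 k_D / ‖v‖³ ≤ (3 + √2) k_D / ‖v‖³`.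
-/

/-- Frobenius norm of a continuous linear map on `ℝ²`, via its matrix entries in the
standard Euclidean basis. -/
noncomputable def frobNorm
    (L : EuclideanSpace ℝ (Fin 2) →L[ℝ] EuclideanSpace ℝ (Fin 2)) : ℝ :=
  Real.sqrt (∑ i : Fin 2, ∑ j : Fin 2, (L (EuclideanSpace.single j 1) i) ^ 2)

open ContinuousLinearMap

theorem norm_sq_rpow_neg_half_eq_inv_pow {E : Type*} [NormedAddCommGroup E] (u : E) (n : ℕ) :
    (‖u‖ ^ 2) ^ (-(n / 2) : ℝ) = (‖u‖ ^ n)⁻¹ := by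
  rw [← Real.rpow_natCast_mul (norm_nonneg u), show ((2 : ℕ) : ℝ) * -(n / 2) = -n by ring,
    Real.rpow_neg (norm_nonneg u), Real.rpow_natCast]

theorem hasFDerivAt_inv_norm_pow_three_smul {E : Type*} [NormedAddCommGroup E]
    [InnerProductSpace ℝ E] {v : E} (hv : v ≠ 0) :
    HasFDerivAt (fun u : E => (‖u‖ ^ 3)⁻¹ • u)
      ((‖v‖ ^ 3)⁻¹ • ContinuousLinearMap.id ℝ E
        - (3 * (‖v‖ ^ 5)⁻¹) • (innerSL ℝ v).smulRight v) v := by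
  have hv2 : ‖v‖ ^ 2 ≠ 0 := by positivity
  -- `‖u‖⁻³ = (‖u‖²)^(-3/2)` exposes the scalar factor as a power of the smooth map `‖·‖²`.
  have h := ((hasStrictFDerivAt_norm_sq v).hasFDerivAt.rpow_const (p := -((3 : ℕ) / 2))
    (Or.inl hv2)).smul (hasFDerivAt_id v)
  rw [show (-((3 : ℕ) / 2) - 1 : ℝ) = -((5 : ℕ) / 2) by norm_num] at h
  simp only [norm_sq_rpow_neg_half_eq_inv_pow] at h
  refine h.congr_fderiv ?_
  ext u
  simp only [add_apply, sub_apply, smul_apply, smulRight_apply, coe_id', id_eq, smul_eq_mul,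
    innerSL_apply_apply, smul_smul]
  rw [sub_eq_add_neg, ← neg_smul]
  ring_nf

theorem frobNorm_smul (c : ℝ) (L : EuclideanSpace ℝ (Fin 2) →L[ℝ] EuclideanSpace ℝ (Fin 2)) :
    frobNorm (c • L) = |c| * frobNorm L := by
  simp only [frobNorm, smul_apply, PiLp.smul_apply, smul_eq_mul, mul_pow, ← Finset.mul_sum]
  rw [Real.sqrt_mul (sq_nonneg c), Real.sqrt_sq_eq_abs]

theorem frobNorm_smul_id_sub_smul_smulRight (a b : ℝ) (v : EuclideanSpace ℝ (Fin 2)) :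
    frobNorm (a • ContinuousLinearMap.id ℝ _ - b • (innerSL ℝ v).smulRight v)
      = √(2 * a ^ 2 - 2 * a * b * ‖v‖ ^ 2 + b ^ 2 * ‖v‖ ^ 4) := by
  have hv : ‖v‖ ^ 2 = v 0 ^ 2 + v 1 ^ 2 := by
    simp [EuclideanSpace.norm_sq_eq, Fin.sum_univ_two]
  simp only [frobNorm, sub_apply, smul_apply, id_apply, smulRight_apply, coe_innerSL_apply,
    EuclideanSpace.inner_single_right, Real.ringHom_apply, one_mul, PiLp.sub_apply,
    PiLp.smul_apply, PiLp.single_apply, smul_eq_mul, mul_ite, mul_one, mul_zero,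
    Fin.sum_univ_two, Fin.isValue, ↓reduceIte, zero_ne_one, zero_sub, even_two, Even.neg_pow,
    one_ne_zero]
  rw [show ‖v‖ ^ 4 = (‖v‖ ^ 2) ^ 2 by ring, hv]
  ring_nf

theorem frobNorm_inv_norm_pow_three_jacobian {v : EuclideanSpace ℝ (Fin 2)} (hv : v ≠ 0) :
    frobNorm ((‖v‖ ^ 3)⁻¹ • ContinuousLinearMap.id ℝ _
        - (3 * (‖v‖ ^ 5)⁻¹) • (innerSL ℝ v).smulRight v) = √5 / ‖v‖ ^ 3 := by
  have hr : ‖v‖ ≠ 0 := norm_ne_zero_iff.mpr hv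
  rw [frobNorm_smul_id_sub_smul_smulRight, show 2 * ((‖v‖ ^ 3)⁻¹) ^ 2
      - 2 * (‖v‖ ^ 3)⁻¹ * (3 * (‖v‖ ^ 5)⁻¹) * ‖v‖ ^ 2 + (3 * (‖v‖ ^ 5)⁻¹) ^ 2 * ‖v‖ ^ 4
      = 5 * (‖v‖ ^ 3)⁻¹ ^ 2 by field_simp; ring,
    Real.sqrt_mul (by norm_num), Real.sqrt_sq (by positivity), div_eq_mul_inv]

theorem sqrt_five_le_three_add_sqrt_two : √5 ≤ 3 + √2 :=
  calc √5 ≤ 3 := Real.sqrt_le_iff.mpr ⟨by norm_num, by norm_num⟩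
    _ ≤ 3 + √2 := le_add_of_nonneg_right (Real.sqrt_nonneg 2)

theorem stmt_9 (kD : ℝ) (hkD : 0 < kD) (x y : EuclideanSpace ℝ (Fin 2)) (hne : x ≠ y) :
    frobNorm (fderiv ℝ (fun z : EuclideanSpace ℝ (Fin 2) =>
        kD • (‖y - z‖ ^ 3)⁻¹ • (y - z)) x)
      ≤ (3 + Real.sqrt 2) * kD / ‖x - y‖ ^ 3 := by
  have hv : y - x ≠ 0 := sub_ne_zero.mpr hne.symm
  have hf : HasFDerivAt (fun z => kD • (‖y - z‖ ^ 3)⁻¹ • (y - z)) _ x :=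
    ((hasFDerivAt_inv_norm_pow_three_smul hv).comp x ((hasFDerivAt_id x).const_sub y)).const_smul kD
  rw [hf.fderiv, comp_neg, comp_id, smul_neg, ← neg_smul, frobNorm_smul, abs_neg,
    abs_of_pos hkD, frobNorm_inv_norm_pow_three_jacobian hv, norm_sub_rev y x,
    mul_div_assoc', mul_comm kD]
  gcongr
  exact sqrt_five_le_three_add_sqrt_two
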